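/- For any integers t, s, g ≥ 1 and any finite extension F_v of ℚ_p, the natural map of coset spaces induced by inclusion gives a bijection M_{(t+s)g}(F_v) / (M_{tg}(F_v) × GL_{sg}(F_v)) ≅ P_{1,(t+s)g}(F_v) / (P_{1,tg}(F_v) × GL_{sg}(F_v)), where M_{tg}(F_v) × GL_{sg}(F_v) and P_{1,tg}(F_v) × GL_{sg}(F_v) are embedded block-diagonally in M_{(t+s)g}(F_v) and P_{1,(t+s)g}(F_v) respectively. -/
import Mathlib


/-!
Statement 4: the inclusion `M_{(t+s)g}(F_v) ⊆ P_{1,(t+s)g}(F_v)` induces a bijection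
of coset spaces
`M_{(t+s)g}(F_v)/(M_{tg}(F_v) × GL_{sg}(F_v)) ≅ P_{1,(t+s)g}(F_v)/(P_{1,tg}(F_v) × GL_{sg}(F_v))`.

We realize all the groups concretely inside `GL_n(F_v)`:
* `PBlock F n` is the standard parabolic `P_{1,n}(F_v)` with Levi `GL_1 × GL_{n-1}`
  (first column vanishes below the `(0,0)` entry);
* `MBlock F n` is the mirabolic subgroup `M_n(F_v) ⊆ P_{1,n}(F_v)` (moreover the
  `(0,0)` entry equals `1`);
* `DiagBlock F n a` consists of the block-diagonal matrices of type `(a, n-a)`;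
* `HP F n a = (P_{1,a} × GL_{n-a})(F_v)` and `HM F n a = (M_a × GL_{n-a})(F_v)`,
  embedded block-diagonally.

The bijectivity of the natural map of coset spaces is expressed, without forming
quotient types, by surjectivity (every `P`-coset of `HP` meets `M`) and injectivity
(two elements of `M` in the same `HP`-coset are in the same `HM`-coset).
-/

/-- The standard parabolic `P_{1,n}` of `GL_n` with Levi `GL_1 × GL_{n-1}`. -/
def PBlock (F : Type) [Field F] (n : ℕ) : Set (Matrix.GeneralLinearGroup (Fin n) F) :=
  {x | ∀ i j : Fin n, (j : ℕ) = 0 → (i : ℕ) ≠ 0 →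
    (x : Matrix (Fin n) (Fin n) F) i j = 0}

/-- The mirabolic subgroup `M_n ⊆ P_{1,n}`: upper-left entry equal to `1`. -/
def MBlock (F : Type) [Field F] (n : ℕ) : Set (Matrix.GeneralLinearGroup (Fin n) F) :=
  {x | (∀ i j : Fin n, (j : ℕ) = 0 → (i : ℕ) ≠ 0 →
      (x : Matrix (Fin n) (Fin n) F) i j = 0) ∧
    (∀ i j : Fin n, (i : ℕ) = 0 → (j : ℕ) = 0 →
      (x : Matrix (Fin n) (Fin n) F) i j = 1)}

/-- Block-diagonal matrices of type `(a, n-a)` in `GL_n`. -/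
def DiagBlock (F : Type) [Field F] (n a : ℕ) : Set (Matrix.GeneralLinearGroup (Fin n) F) :=
  {x | ∀ i j : Fin n, (((i : ℕ) < a ∧ a ≤ (j : ℕ)) ∨ ((j : ℕ) < a ∧ a ≤ (i : ℕ))) →
    (x : Matrix (Fin n) (Fin n) F) i j = 0}

/-- `P_{1,a} × GL_{n-a}` embedded block-diagonally in `GL_n`. -/
def HP (F : Type) [Field F] (n a : ℕ) : Set (Matrix.GeneralLinearGroup (Fin n) F) :=
  DiagBlock F n a ∩ PBlock F n

/-- `M_a × GL_{n-a}` embedded block-diagonally in `GL_n`. -/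
def HM (F : Type) [Field F] (n a : ℕ) : Set (Matrix.GeneralLinearGroup (Fin n) F) :=
  DiagBlock F n a ∩ MBlock F n

theorem statement4' (F : Type) [Field F]
    (t s g : ℕ) (ht : 1 ≤ t) (hs : 1 ≤ s) (hg : 1 ≤ g) :
    (∀ x ∈ PBlock F ((t + s) * g), ∃ m ∈ MBlock F ((t + s) * g),
      ∃ h ∈ HP F ((t + s) * g) (t * g), x = m * h) ∧
    (∀ m ∈ MBlock F ((t + s) * g), ∀ m' ∈ MBlock F ((t + s) * g),
      (∃ h ∈ HP F ((t + s) * g) (t * g), m = m' * h) →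
      ∃ h ∈ HM F ((t + s) * g) (t * g), m = m' * h) := by
  have hn : 0 < (t + s) * g := Nat.mul_pos (by omega) hg
  set n := (t + s) * g with hndef
  set a := t * g with hadef
  let z : Fin n := ⟨0, hn⟩
  have hz : (z : ℕ) = 0 := rfl
  constructor
  · -- surjectivity
    intro x hx
    set c : F := (x : Matrix (Fin n) (Fin n) F) z z with hcdef
    have hc : c ≠ 0 := by
      intro h0
      have h1 : ((x⁻¹ : Matrix.GeneralLinearGroup (Fin n) F) : Matrix (Fin n) (Fin n) F) *
          (x : Matrix (Fin n) (Fin n) F) = 1 := x.inv_mul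
      have h2 := congrFun (congrFun h1 z) z
      rw [Matrix.mul_apply] at h2
      rw [Finset.sum_eq_single z (fun k _ hk => by
          rw [hx k z hz (fun h => hk (Fin.ext h)), mul_zero])
        (fun h => absurd (Finset.mem_univ z) h)] at h2
      rw [← hcdef, h0, mul_zero] at h2
      simp at h2
    -- the diagonal correction matrix
    set d : Fin n → F := fun i => if i = z then c else 1 with hddef
    set d' : Fin n → F := fun i => if i = z then c⁻¹ else 1 with hd'def
    have hdd' : ∀ i, d i * d' i = 1 := by
      intro i
      by_cases h : i = z <;> simp [hddef, hd'def, h, mul_inv_cancel₀ hc]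
    have hd'd : ∀ i, d' i * d i = 1 := by
      intro i
      by_cases h : i = z <;> simp [hddef, hd'def, h, inv_mul_cancel₀ hc]
    set H : Matrix.GeneralLinearGroup (Fin n) F :=
      ⟨Matrix.diagonal d, Matrix.diagonal d',
        by rw [Matrix.diagonal_mul_diagonal]
           rw [show (fun i => d i * d' i) = fun _ => (1 : F) from funext hdd']
           exact Matrix.diagonal_one,
        by rw [Matrix.diagonal_mul_diagonal]
           rw [show (fun i => d' i * d i) = fun _ => (1 : F) from funext hd'd]
           exact Matrix.diagonal_one⟩ with hHdef
    have hHinv : ((H⁻¹ : Matrix.GeneralLinearGroup (Fin n) F) : Matrix (Fin n) (Fin n) F)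
        = Matrix.diagonal d' := rfl
    have hHcoe : (H : Matrix (Fin n) (Fin n) F) = Matrix.diagonal d := rfl
    refine ⟨x * H⁻¹, ?_, H, ⟨?_, ?_⟩, (inv_mul_cancel_right x H).symm⟩
    · -- x * H⁻¹ ∈ MBlock
      have hent : ∀ i j : Fin n,
          ((x * H⁻¹ : Matrix.GeneralLinearGroup (Fin n) F) : Matrix (Fin n) (Fin n) F) i j
            = (x : Matrix (Fin n) (Fin n) F) i j * d' j := by
        intro i j
        show ((x : Matrix (Fin n) (Fin n) F) *
          ((H⁻¹ : Matrix.GeneralLinearGroup (Fin n) F) : Matrix (Fin n) (Fin n) F)) i j = _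
        rw [hHinv, Matrix.mul_diagonal]
      constructor
      · intro i j hj hi
        rw [hent, hx i j hj hi, zero_mul]
      · intro i j hi hj
        have hiz : i = z := Fin.ext hi
        have hjz : j = z := Fin.ext hj
        rw [hent, hiz, hjz, ← hcdef]
        simp [hd'def, mul_inv_cancel₀ hc]
    · -- H ∈ DiagBlock
      intro i j hij
      have hne : i ≠ j := by rcases hij with ⟨h1, h2⟩ | ⟨h1, h2⟩ <;> omega
      rw [hHcoe, Matrix.diagonal_apply_ne _ hne]
    · -- H ∈ PBlock
      intro i j hj hi
      have hne : i ≠ j := fun h => hi (h ▸ hj)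
      rw [hHcoe, Matrix.diagonal_apply_ne _ hne]
  · -- injectivity
    rintro m hm m' hm' ⟨h, ⟨hhD, hhP⟩, hmh⟩
    refine ⟨h, ⟨hhD, hhP, ?_⟩, hmh⟩
    -- show (0,0) entry of h is 1
    have key : (h : Matrix (Fin n) (Fin n) F) z z = 1 := by
      have h1 : (m : Matrix (Fin n) (Fin n) F) z z =
          ((m' : Matrix (Fin n) (Fin n) F) * (h : Matrix (Fin n) (Fin n) F)) z z := by
        rw [hmh]; rfl
      rw [Matrix.mul_apply] at h1
      rw [Finset.sum_eq_single z (fun k _ hk => by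
          rw [hhP k z hz (fun hh => hk (Fin.ext hh)), mul_zero])
        (fun hh => absurd (Finset.mem_univ z) hh)] at h1
      rw [hm.2 z z hz hz, hm'.2 z z hz hz, one_mul] at h1
      exact h1.symm
    intro i j hi hj
    have hiz : i = z := Fin.ext hi
    have hjz : j = z := Fin.ext hj
    rw [hiz, hjz, key]

theorem statement4 (p : ℕ) [Fact p.Prime] (F : Type) [Field F]
    [Algebra ℚ_[p] F] [FiniteDimensional ℚ_[p] F]
    (t s g : ℕ) (ht : 1 ≤ t) (hs : 1 ≤ s) (hg : 1 ≤ g) :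
    -- surjectivity: every coset of `P_{1,tg} × GL_{sg}` in `P_{1,(t+s)g}` meets `M_{(t+s)g}`
    (∀ x ∈ PBlock F ((t + s) * g), ∃ m ∈ MBlock F ((t + s) * g),
      ∃ h ∈ HP F ((t + s) * g) (t * g), x = m * h) ∧
    -- injectivity: elements of `M_{(t+s)g}` in the same `(P_{1,tg} × GL_{sg})`-coset lie
    -- in the same `(M_{tg} × GL_{sg})`-coset
    (∀ m ∈ MBlock F ((t + s) * g), ∀ m' ∈ MBlock F ((t + s) * g),
      (∃ h ∈ HP F ((t + s) * g) (t * g), m = m' * h) →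
      ∃ h ∈ HM F ((t + s) * g) (t * g), m = m' * h) :=
  statement4' F t s g ht hs hg
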